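/- Let Λ be a non-ordinary numerical semigroup with conductor c = c(Λ), jump u = u(Λ) and ω = ω(Λ). If σ is a right generator of Λ with σ ≢ 0 (mod ω), then σ is a strong generator of Λ if and only if σ < c + u. -/

import Mathlib

/-!
Write `m`, `u`, `F`, `c = F + 1` for the multiplicity, jump, Frobenius number and conductor;
non-ordinarity means `m < F`, so `m` is a left element.
If `σ ≥ c + u`, then `σ + m = (m + u) + (σ - u)` with both summands in `Λ \ {σ}`, so `σ` is weak.
Conversely, let `σ < c + u` and `σ + m = x + y` with `0 < x ≤ y` in `Λ \ {σ}`. Then `x ≠ m`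
(otherwise `y = σ`), so `x ≥ m + u` and `y ≤ σ - u < c`; since `F ∉ Λ`, both `x` and `y` are left
elements. Hence `ω` divides `x`, `y` and `m`, so it divides `σ`.
-/

open Pointwise

namespace NumSgpPaper

/-- `S` is a numerical semigroup: an additive submonoid of ℕ with finite complement. -/
structure IsNumSgp (S : Set ℕ) : Prop where
  zero_mem : 0 ∈ S
  add_mem : ∀ ⦃a b : ℕ⦄, a ∈ S → b ∈ S → a + b ∈ S
  cofinite : Sᶜ.Finite

/-- The Frobenius number: the largest gap of `S` (junk value `0` if there are no gaps). -/
noncomputable def frob (S : Set ℕ) : ℕ := sSup Sᶜ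

open Classical in
/-- The conductor: one plus the largest gap, and `0` if there are no gaps (so `c(ℕ) = 0`). -/
noncomputable def conductor (S : Set ℕ) : ℕ := if Sᶜ = ∅ then 0 else frob S + 1

/-- The genus: the number of gaps. -/
noncomputable def genus (S : Set ℕ) : ℕ := Sᶜ.ncard

/-- The multiplicity: the smallest positive element. -/
noncomputable def mult (S : Set ℕ) : ℕ := sInf {n : ℕ | n ∈ S ∧ 0 < n}

/-- The jump: the difference between the second and first positive elements. -/
noncomputable def jump (S : Set ℕ) : ℕ := sInf {n : ℕ | n ∈ S ∧ mult S < n} - mult S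

/-- A minimal generator: a positive element of `S` that is not the sum of
two positive elements of `S`. -/
def IsMinGen (S : Set ℕ) (x : ℕ) : Prop :=
  0 < x ∧ x ∈ S ∧ ¬ ∃ a b : ℕ, 0 < a ∧ 0 < b ∧ a ∈ S ∧ b ∈ S ∧ a + b = x

/-- A right generator: a minimal generator larger than the Frobenius number. -/
def IsRightGen (S : Set ℕ) (x : ℕ) : Prop := IsMinGen S x ∧ frob S < x

/-- A strong generator: a right generator `σ` such that `σ + m(S)` is a minimal
generator of `S \ {σ}`. -/
def IsStrongGen (S : Set ℕ) (σ : ℕ) : Prop :=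
  IsRightGen S σ ∧ IsMinGen (S \ {σ}) (σ + mult S)

/-- `S` is ordinary when its gaps are exactly `{1, …, g(S)}`. -/
def IsOrdinary (S : Set ℕ) : Prop := Sᶜ = Set.Icc 1 (genus S)

/-- The left elements: the elements of `S` smaller than the Frobenius number. -/
def leftEls (S : Set ℕ) : Set ℕ := {x : ℕ | x ∈ S ∧ x < frob S}

/-- The gcd of a set of natural numbers. -/
noncomputable def setGcd (A : Set ℕ) : ℕ :=
  sInf {d : ℕ | (∀ a ∈ A, d ∣ a) ∧ ∀ e : ℕ, (∀ a ∈ A, e ∣ a) → e ∣ d}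

/-- `ω(S)`: the gcd of the left elements of `S`. -/
noncomputable def omega' (S : Set ℕ) : ℕ := setGcd (leftEls S)

/-- The shrinking of `S`: the additive submonoid of ℕ generated by the left
elements divided by their gcd. -/
noncomputable def shrink (S : Set ℕ) : Set ℕ :=
  (AddSubmonoid.closure ((fun x => x / omega' S) '' leftEls S) : AddSubmonoid ℕ)

/-- `T` is a descendant of `S`: a numerical semigroup contained in `S` all of whose
missing elements lie beyond the Frobenius number of `S`. -/
def IsDescendant (S T : Set ℕ) : Prop :=
  IsNumSgp T ∧ T ⊆ S ∧ ∀ x ∈ S \ T, frob S < x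

/-- The pseudo-ordinary semigroup `P_{m,u} = {0, m} ∪ {n : n ≥ m + u}`. -/
def P (m u : ℕ) : Set ℕ := {0, m} ∪ {n : ℕ | m + u ≤ n}

/-- The submonoid of ℕ generated by the interval `{a, …, b}`. -/
def intervalSgp (a b : ℕ) : Set ℕ := (AddSubmonoid.closure (Set.Icc a b) : AddSubmonoid ℕ)

theorem setGcd_dvd {A : Set ℕ} (hA : A.Finite) {a : ℕ} (ha : a ∈ A) : setGcd A ∣ a := by
  classical
  have hgcd : (∀ b ∈ A, hA.toFinset.gcd id ∣ b) ∧
      ∀ e : ℕ, (∀ b ∈ A, e ∣ b) → e ∣ hA.toFinset.gcd id :=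
    ⟨fun b hb => Finset.gcd_dvd (hA.mem_toFinset.mpr hb),
      fun e he => Finset.dvd_gcd fun b hb => he b (hA.mem_toFinset.mp hb)⟩
  exact (Nat.sInf_mem (s := {d | (∀ b ∈ A, d ∣ b) ∧ ∀ e : ℕ, (∀ b ∈ A, e ∣ b) → e ∣ d})
    ⟨_, hgcd⟩).1 a ha

theorem omega'_dvd {S : Set ℕ} {a : ℕ} (ha : a ∈ S) (hlt : a < frob S) : omega' S ∣ a :=
  setGcd_dvd ((Set.finite_Iio (frob S)).subset fun _ hx => hx.2) ⟨ha, hlt⟩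

theorem isOrdinary_of_compl_eq_Icc {S : Set ℕ} {n : ℕ} (hS : Sᶜ = Set.Icc 1 n) :
    IsOrdinary S := by
  have hcard : (Set.Icc 1 n).ncard = n := by
    rw [← Finset.coe_Icc, Set.ncard_coe_finset, Nat.card_Icc]
    omega
  rw [IsOrdinary, genus, hS, hcard]

theorem nonempty_compl_of_not_isOrdinary {S : Set ℕ} (hord : ¬ IsOrdinary S) : Sᶜ.Nonempty :=
  Set.nonempty_iff_ne_empty.mpr fun he => hord (isOrdinary_of_compl_eq_Icc (n := 0) (by simp [he]))

theorem conductor_eq_frob_add_one {S : Set ℕ} (hne : Sᶜ.Nonempty) :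
    conductor S = frob S + 1 := by
  rw [conductor, if_neg hne.ne_empty]

theorem mult_le {S : Set ℕ} {a : ℕ} (ha : a ∈ S) (ha0 : 0 < a) : mult S ≤ a :=
  Nat.sInf_le ⟨ha, ha0⟩

namespace IsNumSgp

variable {S : Set ℕ} (h : IsNumSgp S)
include h

theorem frob_notMem (hne : Sᶜ.Nonempty) : frob S ∉ S :=
  Nat.sSup_mem hne h.cofinite.bddAbove

theorem mem_of_frob_lt {n : ℕ} (hn : frob S < n) : n ∈ S := by
  by_contra hc
  exact (le_csSup h.cofinite.bddAbove hc).not_gt hn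

theorem sInf_pos_mem : sInf {n | n ∈ S ∧ 0 < n} ∈ {n | n ∈ S ∧ 0 < n} :=
  Nat.sInf_mem ⟨frob S + 1, h.mem_of_frob_lt (lt_add_one _), by omega⟩

theorem mult_mem : mult S ∈ S :=
  h.sInf_pos_mem.1

theorem mult_pos : 0 < mult S :=
  h.sInf_pos_mem.2

theorem compl_eq_Icc_of_frob_le_mult (hFm : frob S ≤ mult S) : Sᶜ = Set.Icc 1 (frob S) := by
  rcases Sᶜ.eq_empty_or_nonempty with he | hne
  · simp [frob, he]
  ext x
  refine ⟨fun hx => ⟨Nat.pos_of_ne_zero ?_, le_csSup h.cofinite.bddAbove hx⟩, fun hx hxS => ?_⟩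
  · rintro rfl
    exact hx h.zero_mem
  · have hxF : x = frob S := le_antisymm hx.2 (hFm.trans (mult_le hxS hx.1))
    exact h.frob_notMem hne (hxF ▸ hxS)

theorem mult_lt_frob (hord : ¬ IsOrdinary S) : mult S < frob S := by
  by_contra hc
  exact hord (isOrdinary_of_compl_eq_Icc (h.compl_eq_Icc_of_frob_le_mult (not_lt.mp hc)))

theorem sInf_mult_lt_mem : sInf {n | n ∈ S ∧ mult S < n} ∈ {n | n ∈ S ∧ mult S < n} :=
  Nat.sInf_mem ⟨mult S + frob S + 1, h.mem_of_frob_lt (by omega), by omega⟩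

theorem mult_add_jump_eq : mult S + jump S = sInf {n | n ∈ S ∧ mult S < n} := by
  have hlt : mult S < sInf {n | n ∈ S ∧ mult S < n} := h.sInf_mult_lt_mem.2
  rw [jump]
  omega

theorem mult_add_jump_mem : mult S + jump S ∈ S :=
  h.mult_add_jump_eq ▸ h.sInf_mult_lt_mem.1

theorem jump_pos : 0 < jump S := by
  have hlt : mult S < sInf {n | n ∈ S ∧ mult S < n} := h.sInf_mult_lt_mem.2
  rw [jump]
  omega

theorem mult_add_jump_le {a : ℕ} (ha : a ∈ S) (hma : mult S < a) : mult S + jump S ≤ a :=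
  h.mult_add_jump_eq ▸ Nat.sInf_le (s := {n | n ∈ S ∧ mult S < n}) ⟨ha, hma⟩

theorem not_isMinGen_of_conductor_add_jump_le (hord : ¬ IsOrdinary S) {σ : ℕ}
    (hσ : conductor S + jump S ≤ σ) : ¬ IsMinGen (S \ {σ}) (σ + mult S) := by
  rw [conductor_eq_frob_add_one (nonempty_compl_of_not_isOrdinary hord)] at hσ
  have hmF := h.mult_lt_frob hord
  have hmu := h.mult_add_jump_mem
  have hu := h.jump_pos
  rintro ⟨-, -, hmin⟩
  refine hmin ⟨mult S + jump S, σ - jump S, by omega, by omega, ⟨hmu, ?_⟩,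
    ⟨h.mem_of_frob_lt (by omega), ?_⟩, by omega⟩ <;>
  · rw [Set.mem_singleton_iff]
    omega

theorem omega'_dvd_of_add_eq_add_mult (hord : ¬ IsOrdinary S) {σ x y : ℕ}
    (hσ : σ < conductor S + jump S) (hx0 : 0 < x) (hxS : x ∈ S) (hyS : y ∈ S) (hyσ : y ≠ σ)
    (hxy : x ≤ y) (hsum : x + y = σ + mult S) : omega' S ∣ σ := by
  have hne := nonempty_compl_of_not_isOrdinary hord
  rw [conductor_eq_frob_add_one hne] at hσ
  have hmF := h.mult_lt_frob hord
  have hxm : mult S < x := lt_of_le_of_ne (mult_le hxS hx0) fun hxm => hyσ (by omega)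
  have hx := h.mult_add_jump_le hxS hxm
  have hyF : y < frob S :=
    lt_of_le_of_ne (by omega) fun hyF => h.frob_notMem hne (hyF ▸ hyS)
  have hσm : omega' S ∣ σ + mult S :=
    hsum ▸ dvd_add (omega'_dvd hxS (by omega)) (omega'_dvd hyS hyF)
  exact (Nat.dvd_add_left (omega'_dvd h.mult_mem hmF)).mp hσm

theorem isMinGen_of_lt_conductor_add_jump (hord : ¬ IsOrdinary S) {σ : ℕ}
    (hσS : σ ∈ S) (hmod : ¬ omega' S ∣ σ) (hlt : σ < conductor S + jump S) :
    IsMinGen (S \ {σ}) (σ + mult S) := by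
  have hm := h.mult_pos
  refine ⟨by omega, ⟨h.add_mem hσS h.mult_mem, by simp [hm.ne']⟩, ?_⟩
  rintro ⟨a, b, ha0, hb0, ⟨haS, haσ⟩, ⟨hbS, hbσ⟩, hab⟩
  rcases le_total a b with hle | hle
  · exact hmod (h.omega'_dvd_of_add_eq_add_mult hord hlt ha0 haS hbS hbσ hle hab)
  · exact hmod (h.omega'_dvd_of_add_eq_add_mult hord hlt hb0 hbS haS haσ hle (by omega))

end IsNumSgp

/-- A right generator `σ` of a non-ordinary semigroup `Λ` with `ω(Λ) ∤ σ` is strong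
iff `σ < c + u`. -/
theorem stmt6 (Λ : Set ℕ) (h : IsNumSgp Λ) (hord : ¬ IsOrdinary Λ)
    (σ : ℕ) (hσ : IsRightGen Λ σ) (hmod : ¬ omega' Λ ∣ σ) :
    IsStrongGen Λ σ ↔ σ < conductor Λ + jump Λ :=
  ⟨fun hstrong => not_le.mp fun hle => h.not_isMinGen_of_conductor_add_jump_le hord hle hstrong.2,
    fun hlt => ⟨hσ, h.isMinGen_of_lt_conductor_add_jump hord hσ.1.2.1 hmod hlt⟩⟩

end NumSgpPaper
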